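/- Let 0 ≤ τ ≤ 1/2 and 0 ≤ ω ≤ 1/2 − √(τ(1−τ)). Then q(1/2, τ, ω/2) = k(τ,ω), where k(τ,ω) = h(τ) + ∫₀^ω log₂[ (1 − 2τ + √((1−2τ)² − 4z(1−z)))/(2(1−z)) ] dz. That is, ∫₀^{ω/2} log₂[(P + √(P² − 4Qy²))/(2Q)] dy with α = 1/2 equals ∫₀^ω log₂[(1 − 2τ + √((1−2τ)² − 4z(1−z)))/(2(1−z))] dz. -/
import Mathlib


open Real

/-- Binary entropy function (base-2 logarithms). -/
noncomputable def H (x : ℝ) : ℝ := -(x * logb 2 x) - (1 - x) * logb 2 (1 - x)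

/-- `q(α,τ,ω) = h(τ) + ∫₀^ω log₂[(P + √(P² − 4Qy²))/(2Q)] dy`, where
`P = α(1−α) − τ(1−τ) − y(1−2y)` and `Q = (α−y)(1−α−y)` — the exponent of the Hahn
polynomial. -/
noncomputable def qfun (α τ ω : ℝ) : ℝ :=
  H τ + ∫ y in (0:ℝ)..ω,
    logb 2 (((α * (1 - α) - τ * (1 - τ) - y * (1 - 2*y)) +
      Real.sqrt ((α * (1 - α) - τ * (1 - τ) - y * (1 - 2*y))^2
        - 4 * ((α - y) * (1 - α - y)) * y^2)) / (2 * ((α - y) * (1 - α - y))))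

/-- `k(τ,ω) = h(τ) + ∫₀^ω log₂[(1 − 2τ + √((1−2τ)² − 4z(1−z)))/(2(1−z))] dz` — the exponent
of the Krawtchouk polynomial `K_{τn}(ωn)`. -/
noncomputable def kfun (τ ω : ℝ) : ℝ :=
  H τ + ∫ z in (0:ℝ)..ω,
    logb 2 ((1 - 2*τ + Real.sqrt ((1 - 2*τ)^2 - 4 * z * (1 - z))) / (2 * (1 - z)))

lemma ptwise (τ z : ℝ) (hτ0 : 0 ≤ τ) (hτ1 : τ ≤ 1/2) (hz0 : 0 ≤ z) (hz1 : z ≤ 1/2)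
    (hD : 4 * z * (1 - z) ≤ (1 - 2*τ)^2) :
    logb 2 ((((1:ℝ)/2 * (1 - 1/2) - τ * (1 - τ) - (z/2) * (1 - 2*(z/2))) +
          Real.sqrt (((1:ℝ)/2 * (1 - 1/2) - τ * (1 - τ) - (z/2) * (1 - 2*(z/2)))^2
            - 4 * (((1:ℝ)/2 - z/2) * (1 - 1/2 - z/2)) * (z/2)^2)) /
          (2 * (((1:ℝ)/2 - z/2) * (1 - 1/2 - z/2))))
      = 2 * logb 2 ((1 - 2*τ + Real.sqrt ((1 - 2*τ)^2 - 4 * z * (1 - z))) / (2 * (1 - z))) := by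
  set t : ℝ := 1 - 2*τ with ht_def
  have ht : 0 ≤ t := by simp [ht_def]; linarith
  set s : ℝ := Real.sqrt (t^2 - 4*z*(1-z)) with hs_def
  have hs0 : 0 ≤ s := Real.sqrt_nonneg _
  have hs2 : s^2 = t^2 - 4*z*(1-z) := Real.sq_sqrt (by linarith)
  have h1z : (0:ℝ) < 1 - z := by linarith
  have harg : ((1:ℝ)/2 * (1 - 1/2) - τ * (1 - τ) - (z/2) * (1 - 2*(z/2)))^2
            - 4 * (((1:ℝ)/2 - z/2) * (1 - 1/2 - z/2)) * (z/2)^2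
      = (t/4)^2 * (t^2 - 4*z*(1-z)) := by
    simp only [ht_def]; ring
  have hsqrt : Real.sqrt (((1:ℝ)/2 * (1 - 1/2) - τ * (1 - τ) - (z/2) * (1 - 2*(z/2)))^2
            - 4 * (((1:ℝ)/2 - z/2) * (1 - 1/2 - z/2)) * (z/2)^2) = (t/4) * s := by
    rw [harg, Real.sqrt_mul (sq_nonneg _), Real.sqrt_sq (by linarith : (0:ℝ) ≤ t/4), hs_def]
  have hτt : τ * (1 - τ) = (1 - t^2)/4 := by simp only [ht_def]; ring
  have hK : (((1:ℝ)/2 * (1 - 1/2) - τ * (1 - τ) - (z/2) * (1 - 2*(z/2))) +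
          Real.sqrt (((1:ℝ)/2 * (1 - 1/2) - τ * (1 - τ) - (z/2) * (1 - 2*(z/2)))^2
            - 4 * (((1:ℝ)/2 - z/2) * (1 - 1/2 - z/2)) * (z/2)^2)) /
          (2 * (((1:ℝ)/2 - z/2) * (1 - 1/2 - z/2)))
      = ((t + s) / (2 * (1 - z)))^2 := by
    rw [hsqrt, hτt, div_pow]
    rw [div_eq_div_iff (by nlinarith) (by positivity)]
    linear_combination (-(1-z)^2/2) * hs2
  rw [hK, Real.logb_pow]
  norm_num

/-- Let `0 ≤ τ ≤ 1/2` and `0 ≤ ω ≤ 1/2 − √(τ(1−τ))`. Then `q(1/2, τ, ω/2) = k(τ,ω)`.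
That is, `∫₀^{ω/2} log₂[(P + √(P² − 4Qy²))/(2Q)] dy` with `α = 1/2` equals
`∫₀^ω log₂[(1 − 2τ + √((1−2τ)² − 4z(1−z)))/(2(1−z))] dz`. -/
theorem hahn_eq_krawtchouk (τ ω : ℝ) (hτ0 : 0 ≤ τ) (hτ1 : τ ≤ 1/2)
    (hω0 : 0 ≤ ω) (hω1 : ω ≤ 1/2 - Real.sqrt (τ * (1 - τ))) :
    qfun (1/2) τ (ω/2) = kfun τ ω ∧
    (∫ y in (0:ℝ)..(ω/2),
        logb 2 ((((1:ℝ)/2 * (1 - 1/2) - τ * (1 - τ) - y * (1 - 2*y)) +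
          Real.sqrt (((1:ℝ)/2 * (1 - 1/2) - τ * (1 - τ) - y * (1 - 2*y))^2
            - 4 * (((1:ℝ)/2 - y) * (1 - 1/2 - y)) * y^2)) /
          (2 * (((1:ℝ)/2 - y) * (1 - 1/2 - y)))))
      = ∫ z in (0:ℝ)..ω,
          logb 2 ((1 - 2*τ + Real.sqrt ((1 - 2*τ)^2 - 4 * z * (1 - z))) / (2 * (1 - z))) := by
  have hsnn : 0 ≤ Real.sqrt (τ * (1 - τ)) := Real.sqrt_nonneg _
  have hssq : Real.sqrt (τ * (1 - τ)) ^ 2 = τ * (1 - τ) :=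
    Real.sq_sqrt (by nlinarith)
  set f : ℝ → ℝ := fun y =>
    logb 2 ((((1:ℝ)/2 * (1 - 1/2) - τ * (1 - τ) - y * (1 - 2*y)) +
      Real.sqrt (((1:ℝ)/2 * (1 - 1/2) - τ * (1 - τ) - y * (1 - 2*y))^2
        - 4 * (((1:ℝ)/2 - y) * (1 - 1/2 - y)) * y^2)) /
      (2 * (((1:ℝ)/2 - y) * (1 - 1/2 - y)))) with hf_def
  set g : ℝ → ℝ := fun z =>
    logb 2 ((1 - 2*τ + Real.sqrt ((1 - 2*τ)^2 - 4 * z * (1 - z))) / (2 * (1 - z))) with hg_def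
  have key : (∫ y in (0:ℝ)..(ω/2), f y) = ∫ z in (0:ℝ)..ω, g z := by
    have h1 : (∫ z in (0:ℝ)..ω, f (z/2)) = (2:ℝ) • ∫ y in ((0:ℝ)/2)..(ω/2), f y :=
      intervalIntegral.integral_comp_div (a := 0) (b := ω) f two_ne_zero
    have h2 : (∫ z in (0:ℝ)..ω, f (z/2)) = ∫ z in (0:ℝ)..ω, 2 * g z := by
      apply intervalIntegral.integral_congr
      intro z hz
      rw [Set.uIcc_of_le hω0] at hz
      obtain ⟨hz0, hz1⟩ := hz
      have hz12 : z ≤ 1/2 := by linarith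
      have hD : 4 * z * (1 - z) ≤ (1 - 2*τ)^2 := by
        have h1 : z ≤ 1/2 - Real.sqrt (τ * (1 - τ)) := le_trans hz1 hω1
        nlinarith [hssq, hsnn]
      simpa [hf_def, hg_def] using ptwise τ z hτ0 hτ1 hz0 hz12 hD
    have h3 : (∫ z in (0:ℝ)..ω, 2 * g z) = 2 * ∫ z in (0:ℝ)..ω, g z := by
      simpa using intervalIntegral.integral_const_mul (a := 0) (b := ω) 2 g
    rw [h2, h3] at h1
    norm_num at h1
    linarith
  refine ⟨?_, key⟩
  simp only [qfun, kfun]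
  rw [key]
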